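/- arXiv:1910.12163 — 3 statements merged into one kernel-verified Lean document; each statement's English description precedes it below -/
import Mathlib

section
/- Let d ≥ 1, let w ∈ ℝ^d with w ≠ 0, b ∈ ℝ, ε > 0, δ ≥ 0, and let μ₀ ∈ ℝ^d be a unit vector with w·μ₀ ≥ 0 and such that w is not a scalar multiple of μ₀. Set v₀ = w/‖w‖₂, cos θ = v₀·μ₀, n = v₀ − (v₀·μ₀)μ₀, n₀ = n/‖n‖₂, β = min(ε cos θ, δ), and u₂ = β μ₀ + √(ε² − β²) n₀. Then Ω_{ε,δ} = Ω(u₂) ∪ Ω(−u₂); that is, x has an (ε,δ)-strong-adversarial example if and only if the classification of x changes under at least one of the perturbations +u₂ or −u₂. -/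
open MeasureTheory ProbabilityTheory
open scoped ENNReal NNReal

/-- Euclidean inner product on `ℝ^d`. -/
noncomputable def dotp {d : ℕ} (w x : Fin d → ℝ) : ℝ := ∑ i, w i * x i

/-- The `ℓ₂` norm on `ℝ^d`. -/
noncomputable def l2 {d : ℕ} (w : Fin d → ℝ) : ℝ := Real.sqrt (∑ i, (w i)^2)

/-- The product Gaussian measure `N(m, σ²I_d)` on `ℝ^d`. -/
noncomputable def gaussPi {d : ℕ} (m : Fin d → ℝ) (σ : ℝ) : Measure (Fin d → ℝ) :=
  Measure.pi fun i => gaussianReal (m i) ((σ^2).toNNReal)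

/-- The standard normal cumulative distribution function `Φ`. -/
noncomputable def Phi (x : ℝ) : ℝ := ((gaussianReal 0 1) (Set.Iic x)).toReal

/-- The `ℓp` norm on `ℝ^d` for `p ∈ [1,∞]` (as an extended real exponent). -/
noncomputable def lpnorm {d : ℕ} (p : ℝ≥0∞) (v : Fin d → ℝ) : ℝ :=
  if p = ∞ then ⨆ i, |v i| else (∑ i, |v i| ^ p.toReal) ^ (1 / p.toReal)

/-- The `ℓp` norm on `ℝ^d` for a real exponent `p ∈ [1,∞)`. -/
noncomputable def lpR {d : ℕ} (p : ℝ) (v : Fin d → ℝ) : ℝ := (∑ i, |v i| ^ p) ^ (1/p)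

set_option maxHeartbeats 1000000

section aux
variable {d : ℕ}

lemma dotp_comm (u v : Fin d → ℝ) : dotp u v = dotp v u := by
  simp [dotp, mul_comm]

lemma dotp_add_right (w u v : Fin d → ℝ) : dotp w (u + v) = dotp w u + dotp w v := by
  simp [dotp, mul_add, Finset.sum_add_distrib]

lemma dotp_smul_right (w : Fin d → ℝ) (c : ℝ) (v : Fin d → ℝ) :
    dotp w (c • v) = c * dotp w v := by
  simp [dotp, Finset.mul_sum, mul_left_comm]

lemma dotp_neg_right (w v : Fin d → ℝ) : dotp w (-v) = -dotp w v := by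
  simp [dotp]

lemma dotp_sub_right (w u v : Fin d → ℝ) : dotp w (u - v) = dotp w u - dotp w v := by
  simp [dotp, mul_sub, Finset.sum_sub_distrib]

lemma dotp_add_left (u v w : Fin d → ℝ) : dotp (u + v) w = dotp u w + dotp v w := by
  rw [dotp_comm, dotp_add_right, dotp_comm w u, dotp_comm w v]

lemma dotp_smul_left (c : ℝ) (v w : Fin d → ℝ) : dotp (c • v) w = c * dotp v w := by
  rw [dotp_comm, dotp_smul_right, dotp_comm]

lemma dotp_sub_left (u v w : Fin d → ℝ) : dotp (u - v) w = dotp u w - dotp v w := by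
  rw [dotp_comm, dotp_sub_right, dotp_comm w u, dotp_comm w v]

lemma l2_eq (v : Fin d → ℝ) : l2 v = Real.sqrt (dotp v v) := by
  simp [l2, dotp, pow_two]

lemma dotp_self_nonneg (v : Fin d → ℝ) : 0 ≤ dotp v v :=
  Finset.sum_nonneg fun _ _ => mul_self_nonneg _

lemma sq_l2 (v : Fin d → ℝ) : (l2 v)^2 = dotp v v := by
  rw [l2_eq, Real.sq_sqrt (dotp_self_nonneg v)]

lemma dotp_self_pos (v : Fin d → ℝ) (hv : v ≠ 0) : 0 < dotp v v := by
  rcases (Function.ne_iff).1 hv with ⟨i, hi⟩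
  simp only [Pi.zero_apply] at hi
  exact Finset.sum_pos' (fun j _ => mul_self_nonneg _)
    ⟨i, Finset.mem_univ i, mul_self_pos.2 hi⟩

lemma l2_pos (v : Fin d → ℝ) (hv : v ≠ 0) : 0 < l2 v := by
  rw [l2_eq]
  exact Real.sqrt_pos.2 (dotp_self_pos v hv)

lemma l2_nonneg (v : Fin d → ℝ) : 0 ≤ l2 v := by
  rw [l2_eq]; exact Real.sqrt_nonneg _

lemma l2_neg (v : Fin d → ℝ) : l2 (-v) = l2 v := by
  simp [l2]

lemma sq_le_nonneg (x y : ℝ) (hy : 0 ≤ y) (h : x^2 ≤ y^2) : x ≤ y := by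
  nlinarith

lemma key_scalar (ε δ c s a t β q : ℝ) (hε : 0 < ε) (hδ : 0 ≤ δ) (hc : 0 ≤ c) (hs : 0 ≤ s)
    (hcs : c^2 + s^2 = 1) (hβ : β = min (ε*c) δ) (ha : |a| ≤ δ) (hat : a^2 + t^2 ≤ ε^2)
    (hq : 0 ≤ q) (hq2 : q^2 = ε^2 - β^2) : c*a + s*t ≤ β*c + q*s := by
  have ha1 : a ≤ δ := (abs_le.1 ha).2
  have ha2 : -δ ≤ a := (abs_le.1 ha).1
  have haε : a^2 ≤ ε^2 := by nlinarith [sq_nonneg t]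
  obtain ⟨p, hp, hp2⟩ : ∃ p : ℝ, 0 ≤ p ∧ p^2 = ε^2 - a^2 :=
    ⟨Real.sqrt (ε^2 - a^2), Real.sqrt_nonneg _, Real.sq_sqrt (by linarith)⟩
  have htp : t ≤ p := by
    have : t^2 ≤ p^2 := by nlinarith
    nlinarith [le_abs_self t]
  have hst : s*t ≤ s*p := mul_le_mul_of_nonneg_left htp hs
  have main : c*a + s*p ≤ β*c + q*s := by
    rcases le_total (ε*c) δ with hmin | hmin
    · have hβ' : β = ε*c := by rw [hβ, min_eq_left hmin]
      have hqs : q = ε*s :=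
        le_antisymm
          (sq_le_nonneg q (ε*s) (mul_nonneg hε.le hs) (by nlinarith))
          (sq_le_nonneg (ε*s) q hq (by nlinarith))
      rw [hβ', hqs]
      nlinarith [sq_nonneg (a*s - p*c), sq_nonneg (c*a + s*p - ε)]
    · have hβ' : β = δ := by rw [hβ, min_eq_right hmin]
      rw [hβ']
      have hq2' : q^2 = ε^2 - δ^2 := by rw [hq2, hβ']
      have hcq : s*δ ≤ c*q := by
        apply sq_le_nonneg _ _ (mul_nonneg hc hq)
        nlinarith
      have haδ : a^2 ≤ δ^2 := sq_le_sq' ha2 ha1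
      have hpq : q ≤ p := by
        apply sq_le_nonneg _ _ hp
        linarith
      have hcp : s*δ ≤ c*p := le_trans hcq (mul_le_mul_of_nonneg_left hpq hc)
      rcases eq_or_lt_of_le (add_nonneg hp hq) with hpq0 | hpq0
      · have hp0 : p = 0 := by linarith
        have hq0 : q = 0 := by linarith
        rw [hp0, hq0]
        nlinarith
      · have h1 : 0 ≤ (δ - a) * (c*(p+q) - s*(δ+a)) := by
          apply mul_nonneg (by linarith)
          nlinarith
        have h2 : 0 ≤ (p+q) * ((δ*c + q*s) - (c*a + s*p)) := by nlinarith
        nlinarith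
  linarith

end aux

/-- `Ω_{ε,δ} = Ω(u₂) ∪ Ω(−u₂)` for a linear classifier `(w, b)`,
where `u₂ = β μ₀ + √(ε² − β²) n₀`, `β = min(ε cos θ, δ)`. -/
theorem strong_adversarial_defining_set {d : ℕ} (hd : 1 ≤ d)
    (w : Fin d → ℝ) (hw : w ≠ 0) (b ε δ : ℝ) (hε : 0 < ε) (hδ : 0 ≤ δ)
    (μ₀ : Fin d → ℝ) (hμ₀ : l2 μ₀ = 1) (hwμ : 0 ≤ dotp w μ₀)
    (hnotmul : ∀ c : ℝ, w ≠ c • μ₀)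
    (v₀ n n₀ : Fin d → ℝ) (cosθ β : ℝ) (u₂ : Fin d → ℝ)
    (hv₀ : v₀ = (l2 w)⁻¹ • w)
    (hcos : cosθ = dotp v₀ μ₀)
    (hn : n = v₀ - (dotp v₀ μ₀) • μ₀)
    (hn₀ : n₀ = (l2 n)⁻¹ • n)
    (hβ : β = min (ε * cosθ) δ)
    (hu₂ : u₂ = β • μ₀ + Real.sqrt (ε^2 - β^2) • n₀)
    (x : Fin d → ℝ) :
    (∃ v : Fin d → ℝ, l2 v ≤ ε ∧ |dotp v μ₀| ≤ δ ∧
        Xor' (0 < dotp w x + b) (0 < dotp w (x + v) + b)) ↔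
      (Xor' (0 < dotp w x + b) (0 < dotp w (x + u₂) + b) ∨
       Xor' (0 < dotp w x + b) (0 < dotp w (x + (-u₂)) + b)) := by
  set W := l2 w with hW
  have hWpos : 0 < W := l2_pos w hw
  have hww : dotp w w = W^2 := (sq_l2 w).symm
  have hμμ : dotp μ₀ μ₀ = 1 := by rw [← sq_l2, hμ₀]; norm_num
  have hwv₀ : w = W • v₀ := by
    rw [hv₀, smul_smul, mul_inv_cancel₀ hWpos.ne', one_smul]
  have hv₀v₀ : dotp v₀ v₀ = 1 := by
    rw [hv₀, dotp_smul_left, dotp_smul_right, hww]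
    field_simp
  set c := cosθ with hc
  have hc0 : 0 ≤ c := by
    rw [hcos, hv₀, dotp_smul_left]
    exact mul_nonneg (inv_nonneg.2 hWpos.le) hwμ
  have hv₀μ : dotp v₀ μ₀ = c := hcos.symm
  have hnμ : dotp n μ₀ = 0 := by
    rw [hn, dotp_sub_left, dotp_smul_left, hv₀μ, hμμ]; ring
  have hnn : dotp n n = 1 - c^2 := by
    rw [hn]
    simp only [dotp_sub_left, dotp_sub_right, dotp_smul_left, dotp_smul_right,
      hv₀v₀, hμμ, hv₀μ, dotp_comm μ₀ v₀]
    ring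
  have hnne : n ≠ 0 := by
    intro h
    have hv0 : v₀ = c • μ₀ := by
      have h2 := hn
      rw [h] at h2
      have h3 : v₀ = (dotp v₀ μ₀) • μ₀ := by
        rw [← sub_eq_zero]; exact h2.symm
      rwa [hv₀μ] at h3
    exact hnotmul (W * c) (by rw [hwv₀, hv0, smul_smul])
  set s := l2 n with hs
  have hspos : 0 < s := l2_pos n hnne
  have hs2 : s^2 = 1 - c^2 := by rw [hs, sq_l2, hnn]
  have hcs : c^2 + s^2 = 1 := by rw [hs2]; ring
  have hc1 : c ≤ 1 := sq_le_nonneg c 1 zero_le_one (by rw [one_pow]; linarith [sq_nonneg s])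
  have hnsn₀ : n = s • n₀ := by
    rw [hn₀, smul_smul, mul_inv_cancel₀ hspos.ne', one_smul]
  have hn₀n₀ : dotp n₀ n₀ = 1 := by
    rw [hn₀, dotp_smul_left, dotp_smul_right, hnn]
    have h1 : (1:ℝ) - c^2 = s * s := by rw [← hs2]; ring
    rw [h1]
    field_simp
  have hn₀μ : dotp n₀ μ₀ = 0 := by
    rw [hn₀, dotp_smul_left, hnμ, mul_zero]
  have hμn₀ : dotp μ₀ n₀ = 0 := by rw [dotp_comm, hn₀μ]
  have hv₀n₀ : dotp v₀ n₀ = s := by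
    rw [hn₀, dotp_smul_right, dotp_comm v₀ n, hn, dotp_sub_left, dotp_smul_left,
      dotp_comm v₀ v₀, hv₀v₀, dotp_comm μ₀ v₀, hv₀μ]
    have h1 : (1:ℝ) - c * c = s * s := by rw [show (1:ℝ) - c*c = 1 - c^2 by ring, ← hs2]; ring
    rw [h1]
    field_simp
  -- β facts
  have hβ0 : 0 ≤ β := by
    rw [hβ]
    exact le_min (mul_nonneg hε.le hc0) hδ
  have hβδ : β ≤ δ := hβ ▸ min_le_right _ _
  have hβε : β ≤ ε := le_trans (hβ ▸ min_le_left _ _)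
    (by calc ε * c ≤ ε * 1 := mul_le_mul_of_nonneg_left hc1 hε.le
      _ = ε := mul_one ε)
  set q := Real.sqrt (ε^2 - β^2) with hqdef
  have hq0 : 0 ≤ q := Real.sqrt_nonneg _
  have hq2 : q^2 = ε^2 - β^2 :=
    Real.sq_sqrt (sub_nonneg.2 (pow_le_pow_left₀ hβ0 hβε 2))
  -- u₂ facts
  have hμu₂ : dotp μ₀ u₂ = β := by
    rw [hu₂]
    simp only [dotp_add_right, dotp_smul_right, hμμ, hμn₀]
    ring
  have hu₂u₂ : dotp u₂ u₂ = ε^2 := by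
    rw [hu₂]
    simp only [dotp_add_left, dotp_add_right, dotp_smul_left, dotp_smul_right,
      hμμ, hμn₀, hn₀μ, hn₀n₀]
    linear_combination hq2
  have hl2u₂ : l2 u₂ = ε := by
    rw [l2_eq, hu₂u₂, Real.sqrt_sq hε.le]
  have hwu₂ : dotp w u₂ = W * (β*c + q*s) := by
    rw [hwv₀, dotp_smul_left, hu₂]
    simp only [dotp_add_right, dotp_smul_right, hv₀μ, hv₀n₀]
  set T := dotp w u₂ with hT
  have hT0 : 0 ≤ T := by
    rw [hwu₂]
    exact mul_nonneg hWpos.le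
      (add_nonneg (mul_nonneg hβ0 hc0) (mul_nonneg hq0 hspos.le))
  -- the bound
  have bound : ∀ v : Fin d → ℝ, l2 v ≤ ε → |dotp v μ₀| ≤ δ → |dotp w v| ≤ T := by
    intro v hv1 hv2
    set a := dotp μ₀ v with ha
    set t := dotp n₀ v with ht
    have hvμ : dotp v μ₀ = a := by rw [dotp_comm]
    have hvn₀ : dotp v n₀ = t := by rw [dotp_comm]
    have hvv : dotp v v ≤ ε^2 := by
      rw [← sq_l2]
      exact pow_le_pow_left₀ (l2_nonneg v) hv1 2
    have hat : a^2 + t^2 ≤ ε^2 := by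
      have hr : 0 ≤ dotp (v - a•μ₀ - t•n₀) (v - a•μ₀ - t•n₀) := dotp_self_nonneg _
      simp only [dotp_sub_left, dotp_sub_right, dotp_smul_left, dotp_smul_right,
        hμμ, hμn₀, hn₀μ, hn₀n₀, hvμ, hvn₀, ← ha, ← ht] at hr
      ring_nf at hr ⊢
      linarith [hvv]
    have hv₀v : dotp v₀ v = c*a + s*t := by
      have hveq : v₀ = n + c • μ₀ := by rw [hn, hv₀μ]; abel
      rw [hveq, dotp_add_left, hnsn₀, dotp_smul_left, dotp_smul_left, ← ht, ← ha]
      ring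
    have hwv : dotp w v = W * (c*a + s*t) := by
      rw [hwv₀, dotp_smul_left, hv₀v]
    have habs : |a| ≤ δ := by rwa [hvμ] at hv2
    have k1 : c*a + s*t ≤ β*c + q*s :=
      key_scalar ε δ c s a t β q hε hδ hc0 hspos.le hcs hβ habs hat hq0 hq2
    have k2 : c*(-a) + s*(-t) ≤ β*c + q*s :=
      key_scalar ε δ c s (-a) (-t) β q hε hδ hc0 hspos.le hcs hβ
        (by rwa [abs_neg]) (by simpa using hat) hq0 hq2
    rw [hwv, hwu₂, abs_mul, abs_of_pos hWpos]
    apply mul_le_mul_of_nonneg_left _ hWpos.le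
    rw [abs_le]
    constructor <;> linarith
  -- main equivalence
  have hwxu : ∀ u : Fin d → ℝ, dotp w (x + u) = dotp w x + dotp w u := fun u =>
    dotp_add_right w x u
  constructor
  · rintro ⟨v, hv1, hv2, hx⟩
    have hb := bound v hv1 hv2
    rw [hwxu] at hx
    rcases hx with ⟨hS, hSv⟩ | ⟨hSv, hS⟩
    · right
      rw [hwxu, dotp_neg_right]
      refine Or.inl ⟨hS, fun hcon => ?_⟩
      have h1 : -T ≤ dotp w v := by
        rcases abs_le.1 hb with ⟨h, _⟩; linarith
      exact hSv (by linarith)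
    · left
      rw [hwxu]
      refine Or.inr ⟨?_, hS⟩
      have h1 : dotp w v ≤ T := (abs_le.1 hb).2
      linarith
  · rintro (h | h)
    · exact ⟨u₂, le_of_eq hl2u₂, by rw [dotp_comm, hμu₂, abs_of_nonneg hβ0]; exact hβδ, h⟩
    · refine ⟨-u₂, ?_, ?_, h⟩
      · rw [l2_neg]; exact le_of_eq hl2u₂
      · rw [dotp_comm, dotp_neg_right, hμu₂, abs_neg, abs_of_nonneg hβ0]
        exact hβδ
end

section
/- Let σ > 0, μ, w ∈ ℝ^d with w ≠ 0, and b' ∈ ℝ. Then (1/2)[Φ((w·μ + b')/(‖w‖₂σ)) + Φ((w·μ − b')/(‖w‖₂σ))] ≤ Φ(‖μ‖₂/σ); equivalently, the misclassification rate of any linear classifier on balanced Gaussian mixture data is at least 1 − Φ(‖μ‖₂/σ), the value achieved by the Bayes classifier (w = μ, b' = 0). -/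
open MeasureTheory ProbabilityTheory
open scoped ENNReal NNReal

lemma Phi_eq (x : ℝ) : Phi x = ∫ t in Set.Iic x, gaussianPDFReal 0 1 t := by
  rw [Phi, gaussianReal_apply_eq_integral 0 one_ne_zero, ENNReal.toReal_ofReal]
  exact integral_nonneg fun t => gaussianPDFReal_nonneg _ _ _

lemma Phi_mono : Monotone Phi := fun a b hab =>
  ENNReal.toReal_mono (measure_ne_top _ _) (measure_mono (Set.Iic_subset_Iic.2 hab))

lemma pdf_even (x : ℝ) : gaussianPDFReal 0 1 (-x) = gaussianPDFReal 0 1 x := by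
  simp [gaussianPDFReal, neg_sq]

lemma Phi_add_neg (x : ℝ) : Phi x + Phi (-x) = 1 := by
  have h1 : Phi (-x) = ∫ t in Set.Ioi x, gaussianPDFReal 0 1 t := by
    rw [Phi_eq, ← neg_neg x, ← integral_comp_neg_Iic]
    simp [pdf_even]
  rw [Phi_eq, h1,
    intervalIntegral.integral_Iic_add_Ioi ((integrable_gaussianPDFReal 0 1).integrableOn)
      ((integrable_gaussianPDFReal 0 1).integrableOn),
    integral_gaussianPDFReal_eq_one 0 one_ne_zero]

lemma Phi_zero : Phi (0:ℝ) = 1/2 := by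
  have := Phi_add_neg 0; rw [neg_zero] at this; linarith

lemma pdf_cont : Continuous (gaussianPDFReal 0 1) := by
  unfold gaussianPDFReal; fun_prop

lemma key0 (m t : ℝ) (hm : 0 ≤ m) (ht : 0 ≤ t) :
    Phi (m + t) + Phi (m - t) ≤ 2 * Phi m := by
  have hint : ∀ a : ℝ, IntegrableOn (gaussianPDFReal 0 1) (Set.Iic a) :=
    fun a => (integrable_gaussianPDFReal 0 1).integrableOn
  have h1 : (∫ s in (0:ℝ)..t, gaussianPDFReal 0 1 (m + s)) = Phi (m + t) - Phi m := by
    rw [intervalIntegral.integral_comp_add_left, add_zero,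
      ← intervalIntegral.integral_Iic_sub_Iic (hint m) (hint (m + t)), ← Phi_eq, ← Phi_eq]
  have h2 : (∫ s in (0:ℝ)..t, gaussianPDFReal 0 1 (m - s)) = Phi m - Phi (m - t) := by
    rw [intervalIntegral.integral_comp_sub_left, sub_zero,
      ← intervalIntegral.integral_Iic_sub_Iic (hint (m - t)) (hint m), ← Phi_eq, ← Phi_eq]
  have hle : (∫ s in (0:ℝ)..t, gaussianPDFReal 0 1 (m + s))
      ≤ ∫ s in (0:ℝ)..t, gaussianPDFReal 0 1 (m - s) := by
    apply intervalIntegral.integral_mono_on ht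
    · exact (pdf_cont.comp (continuous_const.add continuous_id)).intervalIntegrable _ _
    · exact (pdf_cont.comp (continuous_const.sub continuous_id)).intervalIntegrable _ _
    · intro s hs
      have hs0 : 0 ≤ s := hs.1
      have hsq : (m - s)^2 ≤ (m + s)^2 := sq_le_sq' (by linarith) (by linarith)
      simp only [gaussianPDFReal, NNReal.coe_one, mul_one, sub_zero]
      apply mul_le_mul_of_nonneg_left _ (by positivity)
      apply Real.exp_le_exp.mpr
      rw [neg_div, neg_div, neg_le_neg_iff]
      exact (div_le_div_iff_of_pos_right (by norm_num)).mpr hsq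
  linarith [h1 ▸ h2 ▸ hle]

lemma key (m t : ℝ) (hm : 0 ≤ m) : Phi (m + t) + Phi (m - t) ≤ 2 * Phi m := by
  rcases le_total 0 t with ht | ht
  · exact key0 m t hm ht
  · have := key0 m (-t) hm (by linarith)
    rw [sub_neg_eq_add, ← sub_eq_add_neg] at this
    linarith


/-- the misclassification rate of any linear classifier is at least
`1 − Φ(‖μ‖₂/σ)`, the Bayes classifier value. -/
theorem bayes_optimality {d : ℕ} (σ : ℝ) (hσ : 0 < σ)
    (μ w : Fin d → ℝ) (hw : w ≠ 0) (b' : ℝ) :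
    (1/2) * (Phi ((dotp w μ + b') / (l2 w * σ)) +
              Phi ((dotp w μ - b') / (l2 w * σ))) ≤ Phi (l2 μ / σ) := by
  obtain ⟨i, hi⟩ := Function.ne_iff.mp hw
  have hl2w : 0 < l2 w := Real.sqrt_pos.2
    (Finset.sum_pos' (fun j _ => sq_nonneg _) ⟨i, Finset.mem_univ i, sq_pos_of_ne_zero hi⟩)
  have hL : 0 < l2 w * σ := mul_pos hl2w hσ
  have hCS : dotp w μ ≤ l2 w * l2 μ := by
    calc dotp w μ ≤ |dotp w μ| := le_abs_self _
    _ = Real.sqrt ((dotp w μ)^2) := (Real.sqrt_sq_eq_abs _).symm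
    _ ≤ Real.sqrt ((∑ i, (w i)^2) * ∑ i, (μ i)^2) :=
        Real.sqrt_le_sqrt (Finset.sum_mul_sq_le_sq_mul_sq Finset.univ w μ)
    _ = l2 w * l2 μ := Real.sqrt_mul (by positivity) _
  set m := dotp w μ / (l2 w * σ) with hm
  set t := b' / (l2 w * σ) with ht
  have e1 : (dotp w μ + b') / (l2 w * σ) = m + t := add_div _ _ _
  have e2 : (dotp w μ - b') / (l2 w * σ) = m - t := sub_div _ _ _
  rw [e1, e2]
  have hmle : m ≤ l2 μ / σ := by
    rw [hm, ← mul_div_mul_left (l2 μ) σ (ne_of_gt hl2w)]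
    exact (div_le_div_iff_of_pos_right hL).mpr hCS
  rcases le_or_gt 0 m with h | h
  · have hk := key m t h
    have h2 := Phi_mono hmle
    linarith
  · have h1 := Phi_mono (show m + t ≤ 0 + t by linarith)
    have h2 := Phi_mono (show m - t ≤ 0 - t by linarith)
    rw [zero_add] at h1; rw [zero_sub] at h2
    have h3 := Phi_add_neg t
    have h4 := Phi_mono (show (0:ℝ) ≤ l2 μ / σ from
      div_nonneg (Real.sqrt_nonneg _) hσ.le)
    rw [Phi_zero] at h4
    linarith
end

section
/- (Lemma 2.) Let d ≥ 1, 1 < p < ∞ with conjugate exponent q (1/p + 1/q = 1), let w ∈ ℝ^d with w ≠ 0, b ∈ ℝ, and ε > 0. Define v_{0|p} ∈ ℝ^d by (v_{0|p})_i = sgn(w_i)·(|w_i|/‖w‖_q)^{q−1}. Then the set Ω_{ε|p} of points x ∈ ℝ^d having an ε-ℓp-adversarial example equals Ω(ε v_{0|p}) ∪ Ω(−ε v_{0|p}), where Ω(v) is the set of x whose classification changes after adding v. -/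
open MeasureTheory ProbabilityTheory
open scoped ENNReal NNReal

/-!
Adding `v` shifts `w · x + b` by `w · v`, and over the ball `‖v‖_p ≤ ε` these shifts fill
`[-ε‖w‖_q, ε‖w‖_q]`: Hölder's inequality bounds them, and the endpoints are attained at `±ε v₀`,
where `v₀` is the unit vector of `ℓp` for which Hölder's inequality is an equality. A shift in
this interval changes the sign of `w · x + b` only if the endpoint of the same sign does.
-/

open Finset

lemma dotp_add {d : ℕ} (w x v : Fin d → ℝ) : dotp w (x + v) = dotp w x + dotp w v := by
  simp only [dotp, Pi.add_apply, mul_add, sum_add_distrib]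

lemma dotp_smul {d : ℕ} (w v : Fin d → ℝ) (c : ℝ) : dotp w (c • v) = c * dotp w v := by
  simp only [dotp, Pi.smul_apply, smul_eq_mul, mul_sum, mul_left_comm]

lemma abs_dotp_le_lpR_mul_lpR {d : ℕ} {p q : ℝ} (hpq : p.HolderConjugate q) (w v : Fin d → ℝ) :
    |dotp w v| ≤ lpR q w * lpR p v := by
  calc |dotp w v| ≤ ∑ i, |w i| * |v i| := by
        simpa only [dotp, abs_mul] using abs_sum_le_sum_abs (fun i => w i * v i) univ
    _ ≤ lpR q w * lpR p v := by
        simpa only [lpR, abs_abs] using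
          Real.inner_le_Lp_mul_Lq univ (fun i => |w i|) (fun i => |v i|) hpq.symm

lemma lpR_smul {d : ℕ} {p : ℝ} (hp : 0 < p) (c : ℝ) (v : Fin d → ℝ) :
    lpR p (c • v) = |c| * lpR p v := by
  simp only [lpR, Pi.smul_apply, smul_eq_mul, abs_mul,
    Real.mul_rpow (abs_nonneg _) (abs_nonneg _), ← mul_sum]
  rw [one_div, Real.mul_rpow (by positivity) (sum_nonneg fun i _ => by positivity),
    Real.rpow_rpow_inv (abs_nonneg c) hp.ne']

lemma lpR_rpow {d : ℕ} {q : ℝ} (hq : q ≠ 0) (w : Fin d → ℝ) : lpR q w ^ q = ∑ i, |w i| ^ q := by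
  rw [lpR, one_div, Real.rpow_inv_rpow (sum_nonneg fun i _ => by positivity) hq]

lemma lpR_nonneg {d : ℕ} (q : ℝ) (w : Fin d → ℝ) : 0 ≤ lpR q w :=
  Real.rpow_nonneg (sum_nonneg fun i _ => by positivity) _

lemma lpR_pos {d : ℕ} (q : ℝ) {w : Fin d → ℝ} (hw : w ≠ 0) : 0 < lpR q w := by
  obtain ⟨i, hi⟩ := Function.ne_iff.mp hw
  have hsum : 0 < ∑ j, |w j| ^ q :=
    sum_pos' (fun j _ => by positivity) ⟨i, mem_univ i, Real.rpow_pos_of_pos (abs_pos.mpr hi) q⟩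
  exact Real.rpow_pos_of_pos hsum _

lemma Real.self_mul_sign (r : ℝ) : r * Real.sign r = |r| := by
  rcases lt_trichotomy r 0 with h | rfl | h
  · rw [Real.sign_of_neg h, abs_of_neg h, mul_neg_one]
  · simp
  · rw [Real.sign_of_pos h, abs_of_pos h, mul_one]

/-- The paper's `v_{0|p}`, written in terms of the conjugate exponent `q`. -/
noncomputable def dualVector {d : ℕ} (q : ℝ) (w : Fin d → ℝ) : Fin d → ℝ :=
  fun i => Real.sign (w i) * (|w i| / lpR q w) ^ (q - 1)

lemma abs_dualVector {d : ℕ} {q : ℝ} (hq : 1 < q) (w : Fin d → ℝ) (i : Fin d) :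
    |dualVector q w i| = (|w i| / lpR q w) ^ (q - 1) := by
  rcases eq_or_ne (w i) 0 with h | h
  · simp [dualVector, h, Real.zero_rpow (sub_pos.mpr hq).ne']
  · rw [dualVector, abs_mul,
      abs_of_nonneg (Real.rpow_nonneg (div_nonneg (abs_nonneg _) (lpR_nonneg q w)) _)]
    rcases Real.sign_apply_eq_of_ne_zero _ h with hs | hs <;> simp [hs]

lemma dotp_dualVector {d : ℕ} {q : ℝ} (hq : 1 < q) {w : Fin d → ℝ} (hw : w ≠ 0) :
    dotp w (dualVector q w) = lpR q w := by
  have hN := lpR_pos q hw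
  have hterm (i : Fin d) : w i * dualVector q w i = |w i| ^ q / lpR q w ^ (q - 1) := by
    rw [dualVector, ← mul_assoc, Real.self_mul_sign, Real.div_rpow (abs_nonneg _) hN.le,
      mul_div_assoc', ← Real.rpow_one_add' (abs_nonneg _) (by linarith), add_sub_cancel]
  rw [dotp, sum_congr rfl fun i _ => hterm i, ← sum_div, ← lpR_rpow (by linarith),
    ← Real.rpow_sub hN, sub_sub_cancel, Real.rpow_one]

lemma lpR_dualVector {d : ℕ} {p q : ℝ} (hpq : p.HolderConjugate q) {w : Fin d → ℝ} (hw : w ≠ 0) :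
    lpR p (dualVector q w) = 1 := by
  have hN := lpR_pos q hw
  have hterm (i : Fin d) : |dualVector q w i| ^ p = |w i| ^ q / lpR q w ^ q := by
    rw [abs_dualVector hpq.symm.lt, ← Real.rpow_mul (by positivity), hpq.symm.sub_one_mul_conj,
      Real.div_rpow (abs_nonneg _) hN.le]
  rw [lpR, sum_congr rfl fun i _ => hterm i, ← sum_div, ← lpR_rpow hpq.symm.ne_zero,
    div_self (by positivity), Real.one_rpow]

lemma xor_pos_add_of_abs_le {a t δ : ℝ} (ht : |t| ≤ δ) (h : Xor (0 < a) (0 < a + t)) :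
    Xor (0 < a) (0 < a + δ) ∨ Xor (0 < a) (0 < a + -δ) := by
  obtain ⟨hlo, hhi⟩ := abs_le.mp ht
  rcases h with ⟨ha, hat⟩ | ⟨hat, ha⟩
  · exact .inr (.inl ⟨ha, by linarith⟩)
  · exact .inl (.inr ⟨by linarith, ha⟩)

theorem lp_adversarial_defining_set_general {d : ℕ}
    (p q : ℝ) (hp : 1 < p) (hpq : 1/p + 1/q = 1)
    (w : Fin d → ℝ) (hw : w ≠ 0) (b ε : ℝ) (hε : 0 < ε)
    (v₀p : Fin d → ℝ)
    (hv₀p : v₀p = fun i => Real.sign (w i) * (|w i| / lpR q w) ^ (q - 1))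
    (x : Fin d → ℝ) :
    (∃ v : Fin d → ℝ, lpR p v ≤ ε ∧
        Xor' (0 < dotp w x + b) (0 < dotp w (x + v) + b)) ↔
      (Xor' (0 < dotp w x + b) (0 < dotp w (x + ε • v₀p) + b) ∨
       Xor' (0 < dotp w x + b) (0 < dotp w (x + (-ε) • v₀p) + b)) := by
  have hconj : p.HolderConjugate q :=
    Real.holderConjugate_iff.mpr ⟨hp, by simpa only [one_div] using hpq⟩
  change v₀p = dualVector q w at hv₀p
  have hshift (c : ℝ) : dotp w (x + c • v₀p) + b = dotp w x + b + c * lpR q w := by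
    rw [dotp_add, dotp_smul, hv₀p, dotp_dualVector hconj.symm.lt hw, add_right_comm]
  simp only [hshift, neg_mul]
  constructor
  · rintro ⟨v, hv, hflip⟩
    rw [dotp_add, add_right_comm] at hflip
    refine xor_pos_add_of_abs_le ?_ hflip
    calc |dotp w v| ≤ lpR q w * lpR p v := abs_dotp_le_lpR_mul_lpR hconj w v
      _ ≤ ε * lpR q w := by rw [mul_comm ε]; exact mul_le_mul_of_nonneg_left hv (lpR_nonneg q w)
  · have hball (c : ℝ) (hc : |c| = ε) : lpR p (c • v₀p) ≤ ε := by
      rw [lpR_smul hconj.pos, hv₀p, lpR_dualVector hconj hw, hc, mul_one]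
    rintro (hflip | hflip)
    · refine ⟨ε • v₀p, hball ε (abs_of_pos hε), ?_⟩
      rwa [hshift]
    · refine ⟨(-ε) • v₀p, hball (-ε) (by rw [abs_neg, abs_of_pos hε]), ?_⟩
      rwa [hshift, neg_mul]

/-- Lemma 2: the defining set of `ε`-`ℓp`-adversarial examples is
`Ω(ε v_{0|p}) ∪ Ω(−ε v_{0|p})` where `(v_{0|p})_i = sgn(w_i)(|w_i|/‖w‖_q)^{q−1}`. -/
theorem lp_adversarial_defining_set {d : ℕ} (hd : 1 ≤ d)
    (p q : ℝ) (hp : 1 < p) (hpq : 1/p + 1/q = 1)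
    (w : Fin d → ℝ) (hw : w ≠ 0) (b ε : ℝ) (hε : 0 < ε)
    (v₀p : Fin d → ℝ)
    (hv₀p : v₀p = fun i => Real.sign (w i) * (|w i| / lpR q w) ^ (q - 1))
    (x : Fin d → ℝ) :
    (∃ v : Fin d → ℝ, lpR p v ≤ ε ∧
        Xor' (0 < dotp w x + b) (0 < dotp w (x + v) + b)) ↔
      (Xor' (0 < dotp w x + b) (0 < dotp w (x + ε • v₀p) + b) ∨
       Xor' (0 < dotp w x + b) (0 < dotp w (x + (-ε) • v₀p) + b)) :=
  lp_adversarial_defining_set_general p q hp hpq w hw b ε hε v₀p hv₀p x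
end
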